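/- arXiv:2401.12766 — 12 statements merged into one kernel-verified Lean document; each statement's English description precedes it below -/
import Mathlib

section
/- Let f : R → T be a surjective homomorphism of commutative rings, let n be a positive integer, and let I be a proper ideal of R containing ker(f). Then the image ideal f(I) is an n-absorbing ideal of T if and only if I is an n-absorbing ideal of R. -/
/-- A proper ideal `I` is `n`-absorbing if whenever a product of `n + 1` elements
lies in `I`, the product of some `n` of them (in increasing index order) lies in `I`. -/
def IsNAbsorbing {R : Type*} [CommRing R] (n : ℕ) (I : Ideal R) : Prop :=
  ∀ x : Fin (n + 1) → R, (∏ i, x i) ∈ I →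
    ∃ ι : Fin n → Fin (n + 1), StrictMono ι ∧ (∏ j, x (ι j)) ∈ I

/-- `omegaR I` is the smallest positive integer `n` such that `I` is `n`-absorbing,
and `∞` if no such `n` exists. -/
noncomputable def omegaR {R : Type*} [CommRing R] (I : Ideal R) : ℕ∞ :=
  sInf {w : ℕ∞ | ∃ n : ℕ, 0 < n ∧ w = (n : ℕ∞) ∧ IsNAbsorbing n I}

/-- If `f : R → T` is a surjective ring homomorphism and `I` is a proper ideal of `R`
containing `ker f`, then `f(I)` is `n`-absorbing iff `I` is `n`-absorbing. -/
theorem map_isNAbsorbing_iff {R T : Type*} [CommRing R] [CommRing T]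
    (f : R →+* T) (hf : Function.Surjective f) (n : ℕ) (hn : 0 < n)
    (I : Ideal R) (hI : I ≠ ⊤) (hker : RingHom.ker f ≤ I) :
    IsNAbsorbing n (I.map f) ↔ IsNAbsorbing n I := by
  have hcomap : Ideal.comap f (I.map f) = I := by
    rw [Ideal.comap_map_of_surjective f hf, sup_eq_left]
    exact hker
  have hmem : ∀ r : R, f r ∈ I.map f ↔ r ∈ I := fun r => by
    conv_rhs => rw [← hcomap, Ideal.mem_comap]
  constructor
  · intro h x hx
    have : f (∏ i, x i) ∈ I.map f := (hmem _).mpr hx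
    rw [map_prod] at this
    obtain ⟨ι, hι, hmemι⟩ := h (fun i => f (x i)) this
    rw [← map_prod] at hmemι
    exact ⟨ι, hι, (hmem _).mp hmemι⟩
  · intro h y hy
    set x : Fin (n + 1) → R := fun i => Function.surjInv hf (y i) with hxdef
    have hfx : ∀ i, f (x i) = y i := fun i => Function.surjInv_eq hf (y i)
    have : f (∏ i, x i) ∈ I.map f := by
      rw [map_prod]
      simpa only [hfx] using hy
    obtain ⟨ι, hι, hmemι⟩ := h x ((hmem _).mp this)
    refine ⟨ι, hι, ?_⟩
    have : f (∏ j, x (ι j)) ∈ I.map f := (hmem _).mpr hmemι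
    rw [map_prod] at this
    simpa only [hfx] using this
end

section
/- Let f : R → T be a surjective homomorphism of commutative rings and let I be a proper ideal of R containing ker(f). Then ω_T(f(I)) = ω_R(I) in ℕ∞. -/
/-- If `f : R → T` is a surjective ring homomorphism and `I` is a proper ideal of `R`
containing `ker f`, then `ω_T (f(I)) = ω_R I`. -/
theorem omegaR_map_eq {R T : Type*} [CommRing R] [CommRing T]
    (f : R →+* T) (hf : Function.Surjective f)
    (I : Ideal R) (hI : I ≠ ⊤) (hker : RingHom.ker f ≤ I) :
    omegaR (I.map f) = omegaR I := by
  have hcomap : Ideal.comap f (I.map f) = I := by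
    rw [Ideal.comap_map_of_surjective f hf]
    exact sup_eq_left.mpr hker
  have hmem : ∀ r : R, f r ∈ I.map f ↔ r ∈ I := by
    intro r
    conv_rhs => rw [← hcomap]
    exact Iff.rfl
  have key : ∀ n : ℕ, IsNAbsorbing n (I.map f) ↔ IsNAbsorbing n I := by
    intro n
    constructor
    · intro h x hx
      have hfx : (∏ i, f (x i)) ∈ I.map f := by
        rw [← map_prod]; exact (hmem _).mpr hx
      obtain ⟨ι, hι, hmemι⟩ := h (fun i => f (x i)) hfx
      refine ⟨ι, hι, ?_⟩
      rw [← hmem, map_prod]; exact hmemι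
    · intro h y hy
      choose x hxy using fun i => hf (y i)
      have hx : (∏ i, x i) ∈ I := by
        rw [← hmem, map_prod]
        simpa [hxy] using hy
      obtain ⟨ι, hι, hmemι⟩ := h x hx
      refine ⟨ι, hι, ?_⟩
      have : f (∏ j, x (ι j)) ∈ I.map f := (hmem _).mpr hmemι
      simpa [map_prod, hxy] using this
  unfold omegaR
  congr 1
  ext w
  simp only [Set.mem_setOf_eq, key]
end

section
/- Let R be a commutative ring, n a positive integer, and I a proper ideal of R. Then I is n-absorbing if and only if for every integer m > n and all x₁, …, x_m ∈ R with x₁⋯x_m ∈ I, there are indices 1 ≤ i₁ < ⋯ < i_n ≤ m such that x_{i₁}⋯x_{i_n} ∈ I. -/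
/-! Induction on the number of factors. Merging two factors `x a * x b` into one shortens the
product by one; if the `n` factors supplied by the induction hypothesis avoid the merged one we
are done, and otherwise they come from `n + 1` original factors, to which `n`-absorption applies
once more. -/

open Finset

theorem Finset.prod_update_mul_of_mem_of_notMem {ι M : Type*} [CommMonoid M] [DecidableEq ι]
    {t : Finset ι} {a b : ι} (ha : a ∈ t) (hb : b ∉ t) (x : ι → M) :
    ∏ i ∈ t, Function.update x a (x a * x b) i = ∏ i ∈ insert b t, x i := by
  rw [prod_update_of_mem ha, prod_insert hb, ← mul_prod_erase t x ha, sdiff_singleton_eq_erase,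
    mul_assoc, mul_left_comm]

namespace IsNAbsorbing

variable {R ι : Type*} [CommRing R] {n : ℕ} {I : Ideal R}

theorem exists_subset_card_eq_prod_mem_of_card_eq_succ (h : IsNAbsorbing n I) (x : ι → R)
    {s : Finset ι} (hs : #s = n + 1) (hx : ∏ i ∈ s, x i ∈ I) :
    ∃ t ⊆ s, #t = n ∧ ∏ i ∈ t, x i ∈ I := by
  let e : Fin (n + 1) ≃ s := (Fintype.equivFinOfCardEq (by rw [Fintype.card_coe, hs])).symm
  have hprod : ∏ j, x (e j) = ∏ i ∈ s, x i := by
    rw [← prod_coe_sort s]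
    exact e.prod_comp fun i : s => x i
  obtain ⟨f, hf, hmem⟩ := h (fun j => x (e j)) (hprod ▸ hx)
  let emb : Fin n ↪ ι :=
    ⟨fun j => e (f j), Subtype.val_injective.comp (e.injective.comp hf.injective)⟩
  refine ⟨univ.map emb, fun i hi => ?_, by simp, by rwa [prod_map]⟩
  obtain ⟨j, -, rfl⟩ := mem_map.1 hi
  exact (e (f j)).2

theorem exists_subset_card_eq_prod_mem (h : IsNAbsorbing n I) (x : ι → R)
    {s : Finset ι} (hs : n < #s) (hx : ∏ i ∈ s, x i ∈ I) :
    ∃ t ⊆ s, #t = n ∧ ∏ i ∈ t, x i ∈ I := by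
  classical
  obtain ⟨k, hk⟩ := Nat.exists_eq_add_of_lt hs
  induction k generalizing s x with
  | zero => exact h.exists_subset_card_eq_prod_mem_of_card_eq_succ x hk hx
  | succ k ih =>
    obtain ⟨a, ha, b, hb, hab⟩ := one_lt_card.1 (by omega : 1 < #s)
    set y := Function.update x a (x a * x b)
    have hmerge : ∏ i ∈ s.erase b, y i = ∏ i ∈ s, x i := by
      rw [prod_update_mul_of_mem_of_notMem (mem_erase.2 ⟨hab, ha⟩) (notMem_erase b s),
        insert_erase hb]
    have hcard : #(s.erase b) = n + k + 1 := by rw [card_erase_of_mem hb]; omega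
    obtain ⟨t, hts, htcard, ht⟩ := ih y (by omega) (hmerge ▸ hx) hcard
    have hbt : b ∉ t := fun hbt => notMem_erase b s (hts hbt)
    by_cases hat : a ∈ t
    · rw [prod_update_mul_of_mem_of_notMem hat hbt] at ht
      obtain ⟨u, hut, hucard, hu⟩ := h.exists_subset_card_eq_prod_mem_of_card_eq_succ x
        (by rw [card_insert_of_notMem hbt, htcard]) ht
      exact ⟨u, hut.trans (insert_subset hb (hts.trans (erase_subset b s))), hucard, hu⟩
    · rw [prod_update_of_notMem hat] at ht
      exact ⟨t, hts.trans (erase_subset b s), htcard, ht⟩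

end IsNAbsorbing

theorem isNAbsorbing_iff_forall_gt_general {R : Type*} [CommRing R] (n : ℕ)
    (I : Ideal R) :
    IsNAbsorbing n I ↔
      ∀ m : ℕ, n < m → ∀ x : Fin m → R, (∏ i, x i) ∈ I →
        ∃ ι : Fin n → Fin m, StrictMono ι ∧ (∏ j, x (ι j)) ∈ I := by
  refine ⟨fun h m hm x hx => ?_, fun h => h (n + 1) n.lt_succ_self⟩
  obtain ⟨t, -, htcard, ht⟩ :=
    h.exists_subset_card_eq_prod_mem x (by rwa [card_univ, Fintype.card_fin]) hx
  refine ⟨t.orderEmbOfFin htcard, (t.orderEmbOfFin htcard).strictMono, ?_⟩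
  rwa [← map_orderEmbOfFin_univ t htcard, prod_map] at ht

/-- `I` is `n`-absorbing iff for every `m > n` and every product of `m` elements lying
in `I`, the product of some `n` of them lies in `I`. -/
theorem isNAbsorbing_iff_forall_gt {R : Type*} [CommRing R] (n : ℕ) (hn : 0 < n)
    (I : Ideal R) (hI : I ≠ ⊤) :
    IsNAbsorbing n I ↔
      ∀ m : ℕ, n < m → ∀ x : Fin m → R, (∏ i, x i) ∈ I →
        ∃ ι : Fin n → Fin m, StrictMono ι ∧ (∏ j, x (ι j)) ∈ I :=
  isNAbsorbing_iff_forall_gt_general n I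
end

section
/- Let R be a commutative ring and let I₁, …, I_m be proper ideals of R such that I_j is an n_j-absorbing ideal of R for each 1 ≤ j ≤ m. Then the intersection I₁ ∩ ⋯ ∩ I_m is an n-absorbing ideal of R, where n = n₁ + ⋯ + n_m. -/
lemma prod_orderEmbOfFin_aux {α M : Type*} [LinearOrder α] [CommMonoid M]
    (T : Finset α) {k : ℕ} (h : T.card = k) (x : α → M) :
    ∏ j, x (T.orderEmbOfFin h j) = ∏ i ∈ T, x i := by
  rw [← Finset.prod_image (f := x) (g := T.orderEmbOfFin h)
      (fun a _ b _ hab => (T.orderEmbOfFin h).injective hab)]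
  congr 1
  apply Finset.eq_of_subset_of_card_le
  · intro a ha
    simp only [Finset.mem_image] at ha
    obtain ⟨j, _, rfl⟩ := ha
    exact Finset.orderEmbOfFin_mem T h j
  · rw [h, Finset.card_image_of_injective _ (T.orderEmbOfFin h).injective,
      Finset.card_univ, Fintype.card_fin]

lemma absorb_key {R : Type*} [CommRing R] {n : ℕ} {I : Ideal R} (h : IsNAbsorbing n I)
    {α : Type*} [LinearOrder α] :
    ∀ k : ℕ, ∀ (T : Finset α) (x : α → R), T.card = k → n ≤ k →
      (∏ i ∈ T, x i) ∈ I → ∃ S ⊆ T, S.card = n ∧ (∏ i ∈ S, x i) ∈ I := by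
  intro k
  induction k using Nat.strong_induction_on with
  | _ k ih =>
  intro T x hT hnk hx
  rcases eq_or_lt_of_le hnk with heq | hlt
  · exact ⟨T, le_refl T, hT.trans heq.symm, hx⟩
  rcases eq_or_lt_of_le (Nat.succ_le_of_lt hlt) with heq | hlt2
  · -- k = n + 1 : apply absorbing directly
    have hT' : T.card = n + 1 := hT.trans heq.symm
    set e := T.orderEmbOfFin hT' with he
    have hprod : (∏ i, x (e i)) ∈ I := by
      rw [prod_orderEmbOfFin_aux T hT' x]; exact hx
    obtain ⟨ι, hι, hmem⟩ := h (fun i => x (e i)) hprod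
    refine ⟨Finset.image (fun j => e (ι j)) Finset.univ, ?_, ?_, ?_⟩
    · intro a ha
      simp only [Finset.mem_image] at ha
      obtain ⟨j, _, rfl⟩ := ha
      exact Finset.orderEmbOfFin_mem T hT' (ι j)
    · rw [Finset.card_image_of_injective _
        (show Function.Injective fun j => e (ι j) from
          fun a b hab => hι.injective (e.injective hab)),
        Finset.card_univ, Fintype.card_fin]
    · rw [Finset.prod_image (fun a _ b _ hab =>
        hι.injective (e.injective hab))]
      exact hmem
  · -- k > n + 1 : merge two elements
    have h2 : 1 < T.card := by omega
    obtain ⟨a, ha, b, hb, hab⟩ := Finset.one_lt_card.mp h2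
    set y := Function.update x a (x a * x b) with hy
    have ha' : a ∈ T.erase b := Finset.mem_erase.mpr ⟨hab, ha⟩
    have hcard' : (T.erase b).card = k - 1 := by
      rw [Finset.card_erase_of_mem hb, hT]
    have hprod' : (∏ i ∈ T.erase b, y i) ∈ I := by
      have e1 : ∏ i ∈ T.erase b, y i
          = y a * ∏ i ∈ (T.erase b).erase a, y i :=
        (Finset.mul_prod_erase _ _ ha').symm
      have e2 : ∏ i ∈ (T.erase b).erase a, y i
          = ∏ i ∈ (T.erase b).erase a, x i := by
        apply Finset.prod_congr rfl
        intro i hi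
        have : i ≠ a := (Finset.mem_erase.mp hi).1
        simp [hy, Function.update_of_ne this]
      have e3 : ∏ i ∈ T, x i
          = x b * (x a * ∏ i ∈ (T.erase b).erase a, x i) := by
        rw [Finset.mul_prod_erase _ _ ha', Finset.mul_prod_erase _ _ hb]
      rw [e1, e2, hy, Function.update_self]
      have : x a * x b * ∏ i ∈ (T.erase b).erase a, x i = ∏ i ∈ T, x i := by
        rw [e3]; ring
      rw [this]; exact hx
    obtain ⟨S', hS'sub, hS'card, hS'mem⟩ :=
      ih (k - 1) (by omega) (T.erase b) y hcard' (by omega) hprod'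
    by_cases haS : a ∈ S'
    · -- replace a's merged value: S'' = insert b S'
      have hbS : b ∉ S' := fun hbS => (Finset.mem_erase.mp (hS'sub hbS)).1 rfl
      have hcard'' : (insert b S').card = n + 1 := by
        rw [Finset.card_insert_of_notMem hbS, hS'card]
      have hprod'' : (∏ i ∈ insert b S', x i) ∈ I := by
        have e1 : ∏ i ∈ S', y i = y a * ∏ i ∈ S'.erase a, x i := by
          rw [← Finset.mul_prod_erase _ y haS]
          congr 1
          apply Finset.prod_congr rfl
          intro i hi
          simp [hy, Function.update_of_ne (Finset.mem_erase.mp hi).1]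
        have e2 : ∏ i ∈ insert b S', x i
            = x b * (x a * ∏ i ∈ S'.erase a, x i) := by
          rw [Finset.prod_insert hbS, Finset.mul_prod_erase _ _ haS]
        rw [e2]
        have : x b * (x a * ∏ i ∈ S'.erase a, x i) = ∏ i ∈ S', y i := by
          rw [e1, hy, Function.update_self]; ring
        rw [this]; exact hS'mem
      obtain ⟨S, hSsub, hScard, hSmem⟩ :=
        ih (n + 1) (by omega) (insert b S') x hcard'' (by omega) hprod''
      refine ⟨S, ?_, hScard, hSmem⟩
      intro s hs
      rcases Finset.mem_insert.mp (hSsub hs) with rfl | hsS'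
      · exact hb
      · exact Finset.mem_of_mem_erase (hS'sub hsS')
    · -- a ∉ S' : products agree
      refine ⟨S', fun s hs => Finset.mem_of_mem_erase (hS'sub hs), hS'card, ?_⟩
      have : ∏ i ∈ S', x i = ∏ i ∈ S', y i := by
        apply Finset.prod_congr rfl
        intro i hi
        have : i ≠ a := fun h => haS (h ▸ hi)
        simp [hy, Function.update_of_ne this]
      rw [this]; exact hS'mem

/-- If `I j` is `n j`-absorbing for each `j`, then `⨅ j, I j` is `(∑ j, n j)`-absorbing. -/
theorem isNAbsorbing_iInf {R : Type*} [CommRing R] (m : ℕ) (hm : 0 < m)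
    (I : Fin m → Ideal R) (n : Fin m → ℕ)
    (hprop : ∀ j, I j ≠ ⊤) (hpos : ∀ j, 0 < n j)
    (habs : ∀ j, IsNAbsorbing (n j) (I j)) :
    IsNAbsorbing (∑ j, n j) (⨅ j, I j) := by
  set N := ∑ j, n j with hN
  intro x hx
  have hxj : ∀ j, (∏ i, x i) ∈ I j := fun j =>
    Ideal.mem_iInf.mp hx j
  have hnle : ∀ j, n j ≤ N := fun j =>
    Finset.single_le_sum (fun i _ => Nat.zero_le (n i)) (Finset.mem_univ j)
  -- for each j, pick a subset S j of card n j with product in I j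
  have hS : ∀ j, ∃ S : Finset (Fin (N + 1)), S ⊆ Finset.univ ∧ S.card = n j ∧
      (∏ i ∈ S, x i) ∈ I j := by
    intro j
    obtain ⟨S, h1, h2, h3⟩ := absorb_key (habs j) (N + 1) Finset.univ x
      (by simp) (le_trans (hnle j) (Nat.le_succ N))
      (hxj j)
    exact ⟨S, h1, h2, h3⟩
  choose S _ hScard hSmem using hS
  -- the union of the S j has card ≤ N, so some index a is missed
  set U : Finset (Fin (N + 1)) := Finset.univ.biUnion S with hU
  have hUcard : U.card ≤ N := by
    calc U.card ≤ ∑ j, (S j).card := Finset.card_biUnion_le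
    _ = N := Finset.sum_congr rfl fun j _ => hScard j
  have : ∃ a : Fin (N + 1), a ∉ U := by
    by_contra hcon
    push_neg at hcon
    have : (Finset.univ : Finset (Fin (N + 1))).card ≤ U.card :=
      Finset.card_le_card fun a _ => hcon a
    simp at this
    omega
  obtain ⟨a, haU⟩ := this
  set T : Finset (Fin (N + 1)) := Finset.univ.erase a with hT
  have hTcard : T.card = N := by
    rw [hT, Finset.card_erase_of_mem (Finset.mem_univ a)]
    simp
  have hSsubT : ∀ j, S j ⊆ T := by
    intro j s hs
    refine Finset.mem_erase.mpr ⟨?_, Finset.mem_univ s⟩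
    rintro rfl
    exact haU (Finset.mem_biUnion.mpr ⟨j, Finset.mem_univ j, hs⟩)
  have hTmem : (∏ i ∈ T, x i) ∈ ⨅ j, I j := by
    rw [Ideal.mem_iInf]
    intro j
    rw [← Finset.prod_sdiff (hSsubT j)]
    exact Ideal.mul_mem_left _ _ (hSmem j)
  exact ⟨T.orderEmbOfFin hTcard, (T.orderEmbOfFin hTcard).strictMono, by
    rw [prod_orderEmbOfFin_aux T hTcard x]; exact hTmem⟩
end

section
/- Let R be a commutative ring and let P₁, …, P_n be prime ideals of R. Then the intersection P₁ ∩ ⋯ ∩ P_n is an n-absorbing ideal of R. -/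
/-- The intersection of `n` prime ideals is an `n`-absorbing ideal. -/
theorem isNAbsorbing_iInf_prime {R : Type*} [CommRing R] (n : ℕ) (hn : 0 < n)
    (P : Fin n → Ideal R) (hP : ∀ i, (P i).IsPrime) :
    IsNAbsorbing n (⨅ i, P i) := by
  intro x hx
  -- for each i, the full product lies in P i, hence some factor does
  have hx' : ∀ i, (∏ j, x j) ∈ P i := by
    simpa [Ideal.mem_iInf] using hx
  have hch : ∀ i : Fin n, ∃ j : Fin (n + 1), x j ∈ P i := by
    intro i
    haveI := hP i
    have := (Ideal.IsPrime.prod_mem_iff (s := Finset.univ) (x := x) (p := P i)).mp (hx' i)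
    obtain ⟨j, _, hj⟩ := this
    exact ⟨j, hj⟩
  choose f hf using hch
  -- f is not surjective, pick k outside its range
  have hns : ¬ Function.Surjective f := by
    intro hs
    have := Fintype.card_le_of_surjective f hs
    simp at this
  unfold Function.Surjective at hns
  push_neg at hns
  obtain ⟨k, hk⟩ := hns
  refine ⟨k.succAbove, Fin.strictMono_succAbove k, ?_⟩
  rw [Ideal.mem_iInf]
  intro i
  have hfi : f i ≠ k := fun h => hk i h
  obtain ⟨j, hj⟩ := Fin.exists_succAbove_eq hfi
  have : x (f i) ∈ P i := hf i
  rw [← hj] at this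
  have hdvd : x (k.succAbove j) ∣ ∏ j', x (k.succAbove j') :=
    Finset.dvd_prod_of_mem _ (Finset.mem_univ j)
  obtain ⟨c, hc⟩ := hdvd
  rw [hc]
  exact Ideal.mul_mem_right _ _ this
end

section
/- Let R be an integral domain and let p₁, …, p_n be prime elements of R. Then the principal ideal I = ⟨p₁⋯p_n⟩ generated by their product is an n-absorbing ideal of R. -/
private lemma erase_cons_of_mem {R : Type*} [DecidableEq R] (z w : R) (E : Multiset R)
    (hw : w ∈ E) : (z ::ₘ E).erase w = z ::ₘ E.erase w := by
  by_cases hwz : w = z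
  · subst hwz
    rw [Multiset.erase_cons_head, Multiset.cons_erase hw]
  · exact Multiset.erase_cons_tail _ (fun h => hwz h.symm)

private lemma aux_drop {R : Type*} [CommRing R] [IsDomain R] [DecidableEq R] :
    ∀ (P : Multiset R), (∀ q ∈ P, Prime q) → ∀ (a : R) (Z : Multiset R),
      Multiset.card P < Multiset.card Z → P.prod ∣ a * Z.prod →
      ∃ z ∈ Z, P.prod ∣ a * (Z.erase z).prod := by
  intro P
  induction P using Multiset.induction with
  | empty =>
    intro _ a Z hc _
    obtain ⟨z, hz⟩ := Multiset.card_pos_iff_exists_mem.mp (by simpa using hc)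
    exact ⟨z, hz, by simpa using one_dvd _⟩
  | cons q P ih =>
    intro hP a Z hc hd
    have hq : Prime q := hP q (Multiset.mem_cons_self _ _)
    rw [Multiset.prod_cons] at hd
    have hqd : q ∣ a * Z.prod := dvd_trans (dvd_mul_right q P.prod) hd
    have hP' : ∀ r ∈ P, Prime r := fun r hr => hP r (Multiset.mem_cons_of_mem hr)
    rcases hq.dvd_mul.mp hqd with hqa | hqZ
    · obtain ⟨b, rfl⟩ := hqa
      have hd' : P.prod ∣ b * Z.prod := by
        have h2 : q * P.prod ∣ q * (b * Z.prod) := by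
          rw [← mul_assoc]; exact hd
        exact (mul_dvd_mul_iff_left hq.ne_zero).mp h2
      obtain ⟨z, hz, hdz⟩ := ih hP' b Z (by simp at hc; omega) hd'
      refine ⟨z, hz, ?_⟩
      rw [Multiset.prod_cons, mul_assoc]
      exact mul_dvd_mul_left q hdz
    · obtain ⟨z₀, hz₀, y, hy⟩ := hq.exists_mem_multiset_dvd hqZ
      set E := Z.erase z₀ with hE
      have hZE : Z = z₀ ::ₘ E := (Multiset.cons_erase hz₀).symm
      have hZp : Z.prod = q * (y * E.prod) := by
        rw [hZE, Multiset.prod_cons, hy]; ring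
      have hd' : P.prod ∣ (a * y) * E.prod := by
        have h2 : q * P.prod ∣ q * ((a * y) * E.prod) := by
          rw [show q * ((a * y) * E.prod) = a * (q * (y * E.prod)) by ring, ← hZp]
          exact hd
        exact (mul_dvd_mul_iff_left hq.ne_zero).mp h2
      have hcE : Multiset.card P < Multiset.card E := by
        simp only [hE, Multiset.card_erase_of_mem hz₀, Nat.pred_eq_sub_one]
        simp at hc
        omega
      obtain ⟨w, hw, hwd⟩ := ih hP' (a * y) E hcE hd'
      refine ⟨w, Multiset.mem_of_mem_erase hw, ?_⟩
      have hZw : Z.erase w = z₀ ::ₘ E.erase w := by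
        rw [hZE]; exact erase_cons_of_mem z₀ w E hw
      rw [Multiset.prod_cons, hZw, Multiset.prod_cons, hy,
        show a * (q * y * (E.erase w).prod) = q * ((a * y) * (E.erase w).prod) by ring]
      exact mul_dvd_mul_left q hwd



/-- In an integral domain, the ideal generated by a product of `n` prime elements is
`n`-absorbing. -/
theorem isNAbsorbing_span_prod_prime {R : Type*} [CommRing R] [IsDomain R]
    (n : ℕ) (hn : 0 < n) (p : Fin n → R) (hp : ∀ i, Prime (p i)) :
    IsNAbsorbing n (Ideal.span {∏ i, p i}) := by
  classical
  intro x hx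
  by_cases h0 : ∃ j, x j = 0
  · obtain ⟨j, hj⟩ := h0
    have : Nontrivial (Fin (n + 1)) := Fin.nontrivial_iff_two_le.mpr (by omega)
    obtain ⟨k, hk⟩ := exists_ne j
    refine ⟨k.succAbove, Fin.strictMono_succAbove k, ?_⟩
    obtain ⟨m, hm⟩ := Fin.exists_succAbove_eq (Ne.symm hk)
    have : (∏ i, x (k.succAbove i)) = 0 :=
      Finset.prod_eq_zero (Finset.mem_univ m) (by rw [hm, hj])
    rw [this]; exact Ideal.zero_mem _
  · push_neg at h0
    have hdvd : (∏ i, p i) ∣ ∏ i, x i := Ideal.mem_span_singleton.mp hx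
    set P : Multiset R := Multiset.map p Finset.univ.val with hP
    set Z : Multiset R := Multiset.map x Finset.univ.val with hZ
    have hPprod : P.prod = ∏ i, p i := rfl
    have hZprod : Z.prod = ∏ i, x i := rfl
    have hprimes : ∀ q ∈ P, Prime q := by
      intro q hq
      obtain ⟨i, _, rfl⟩ := Multiset.mem_map.mp hq
      exact hp i
    have hcard : Multiset.card P < Multiset.card Z := by
      simp [hP, hZ]
    obtain ⟨z, hz, hd⟩ := aux_drop P hprimes 1 Z hcard (by rw [hPprod, hZprod, one_mul]; exact hdvd)
    obtain ⟨j, _, rfl⟩ := Multiset.mem_map.mp hz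
    refine ⟨j.succAbove, Fin.strictMono_succAbove j, ?_⟩
    rw [Ideal.mem_span_singleton]
    have key : x j * (Z.erase (x j)).prod = x j * ∏ i, x (j.succAbove i) := by
      rw [← Multiset.prod_cons, Multiset.cons_erase hz, hZprod,
        Fin.prod_univ_succAbove x j]
    have := mul_left_cancel₀ (h0 j) key
    rw [← hPprod, ← this]
    simpa using hd
end

section
/- Let R be a commutative ring and I a proper ideal of R. If I is an n-absorbing ideal of R, then the radical √I is an n-absorbing ideal of R; furthermore, xⁿ ∈ I for every x ∈ √I. -/
/-! Applying `n`-absorption to the factors `xᵢ ^ N` of `(x₁ ⋯ xₙ₊₁) ^ N ∈ I` shows that `√I` is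
`n`-absorbing. For the power bound, write `x ^ (m + 1)` with `m ≥ n` as the product of the `n + 1`
factors `x ^ (m + 1 - n), x, …, x`: dropping any one of them leaves `x ^ m` or `x ^ n`, both of which
divide `x ^ m`, so the exponent of a power of `x` lying in `I` can be lowered one step at a time
down to `n`. -/

namespace IsNAbsorbing

variable {R : Type*} [CommRing R] {n : ℕ} {I : Ideal R}

theorem radical (h : IsNAbsorbing n I) : IsNAbsorbing n I.radical := by
  rintro x ⟨N, hN⟩
  obtain ⟨ι, hι, hmem⟩ := h (fun i => x i ^ N) (by rwa [Finset.prod_pow])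
  exact ⟨ι, hι, N, by rwa [Finset.prod_pow] at hmem⟩

theorem pow_mem_of_pow_succ_mem (h : IsNAbsorbing n I) {m : ℕ} (hnm : n ≤ m) {x : R}
    (hx : x ^ (m + 1) ∈ I) : x ^ m ∈ I := by
  set y : Fin (n + 1) → R := Fin.cons (x ^ (m + 1 - n)) fun _ => x
  have hy0 : y 0 = x ^ (m + 1 - n) := rfl
  have hy : ∀ i, i ≠ 0 → y i = x := Fin.cases (absurd rfl ·) fun _ _ => rfl
  have hprod : ∏ i, y i = x ^ (m + 1) := by
    rw [Fin.prod_univ_succ, hy0, Finset.prod_congr rfl fun j _ => hy j.succ j.succ_ne_zero,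
      Finset.prod_const, Finset.card_univ, Fintype.card_fin, ← pow_add]
    congr 1
    omega
  obtain ⟨ι, hι, hmem⟩ := h y (hprod ▸ hx)
  by_cases hzero : ∃ j, ι j = 0
  · obtain ⟨j₀, hj₀⟩ := hzero
    obtain ⟨k, rfl⟩ : ∃ k, n = k + 1 := Nat.exists_eq_succ_of_ne_zero j₀.pos.ne'
    have hι0 : ι 0 = 0 := Fin.le_zero_iff.mp (hj₀ ▸ hι.monotone (Fin.zero_le j₀))
    have hιsucc : ∀ j : Fin k, ι j.succ ≠ 0 := fun j => (hι0 ▸ hι j.succ_pos).ne'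
    rw [Fin.prod_univ_succ, hι0, hy0,
      Finset.prod_congr rfl fun j _ => hy _ (hιsucc j), Finset.prod_const, Finset.card_univ,
      Fintype.card_fin, ← pow_add] at hmem
    convert hmem using 2
    omega
  · rw [not_exists] at hzero
    rw [Finset.prod_congr rfl fun j _ => hy _ (hzero j), Finset.prod_const, Finset.card_univ,
      Fintype.card_fin] at hmem
    rw [← Nat.sub_add_cancel hnm, pow_add]
    exact I.mul_mem_left _ hmem

theorem pow_mem_of_pow_mem (h : IsNAbsorbing n I) {x : R} {k : ℕ} (hx : x ^ k ∈ I) :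
    x ^ n ∈ I := by
  suffices ∀ j, x ^ (n + j) ∈ I → x ^ n ∈ I from this k (pow_add x n k ▸ I.mul_mem_left _ hx)
  intro j
  induction j with
  | zero => exact id
  | succ j ih => exact fun hj => ih (h.pow_mem_of_pow_succ_mem (Nat.le_add_right n j) hj)

end IsNAbsorbing

theorem isNAbsorbing_radical_general {R : Type*} [CommRing R] (n : ℕ)
    (I : Ideal R) (h : IsNAbsorbing n I) :
    IsNAbsorbing n I.radical ∧ ∀ x ∈ I.radical, x ^ n ∈ I :=
  ⟨h.radical, fun _ ⟨_, hk⟩ => h.pow_mem_of_pow_mem hk⟩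

/-- If `I` is `n`-absorbing, then its radical is `n`-absorbing; moreover `x ^ n ∈ I`
for every `x` in the radical of `I`. -/
theorem isNAbsorbing_radical {R : Type*} [CommRing R] (n : ℕ) (hn : 0 < n)
    (I : Ideal R) (hI : I ≠ ⊤) (h : IsNAbsorbing n I) :
    IsNAbsorbing n I.radical ∧ ∀ x ∈ I.radical, x ^ n ∈ I :=
  isNAbsorbing_radical_general n I h
end

section
/- Let n be a positive integer and let p₁, …, p_n be prime numbers (not necessarily distinct). Then the ideal I = ⟨p₁⋯p_n⟩ of ℤ generated by their product satisfies ω_ℤ(I) = n; that is, I is n-absorbing but not k-absorbing for any 1 ≤ k < n. -/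
/-!
A product `m` of `n` primes dividing `x₀ ⋯ xₙ` already divides the product of at most `n` of the
factors: each prime in turn divides some factor and is cancelled from it, and only the factors
touched this way are needed. Conversely, lumping the last primes together writes `m` as a
product of `k + 1` non-units when `k < n`; a product of `k` of them divides a proper cofactor of
`m`, so a multiple of `m` there would make the omitted non-unit divide `1`.
-/

theorem exists_subset_card_le_multiset_prod_dvd {α ι : Type*} [CommMonoidWithZero α]
    [IsCancelMulZero α] [DecidableEq ι] {P : Multiset α} (hP : ∀ q ∈ P, Prime q) {s : Finset ι}
    {x : ι → α} (h : P.prod ∣ ∏ i ∈ s, x i) :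
    ∃ t ⊆ s, t.card ≤ P.card ∧ P.prod ∣ ∏ i ∈ t, x i := by
  induction P using Multiset.induction_on generalizing x with
  | empty => exact ⟨∅, Finset.empty_subset s, le_rfl, by simp⟩
  | cons q P ih =>
    rw [Multiset.prod_cons] at h
    have hq : Prime q := hP q (Multiset.mem_cons_self q P)
    obtain ⟨j, hjs, y, hy⟩ := hq.exists_mem_finset_dvd (dvd_of_mul_right_dvd h)
    set x' := Function.update x j y
    have hcancel : ∀ u : Finset ι, j ∈ u → ∏ i ∈ u, x i = q * ∏ i ∈ u, x' i := fun u hu => by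
      rw [Finset.prod_update_of_mem hu, ← mul_assoc, ← hy,
        Finset.prod_eq_mul_prod_sdiff_singleton_of_mem hu]
    obtain ⟨t, hts, htcard, htdvd⟩ := ih (fun r hr => hP r (Multiset.mem_cons_of_mem hr))
      (x := x') ((mul_dvd_mul_iff_left hq.ne_zero).1 (hcancel s hjs ▸ h))
    refine ⟨insert j t, Finset.insert_subset hjs hts, ?_, ?_⟩
    · grw [Multiset.card_cons, Finset.card_insert_le, htcard]
    · rw [Multiset.prod_cons, hcancel _ (Finset.mem_insert_self j t)]
      exact mul_dvd_mul_left q (htdvd.trans (Finset.prod_dvd_prod_of_subset _ _ _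
        (Finset.subset_insert j t)))

theorem Fin.prod_dvd_prod_succAbove {M : Type*} [CommMonoid M] {n : ℕ} (x : Fin (n + 1) → M)
    {t : Finset (Fin (n + 1))} {j : Fin (n + 1)} (hj : j ∉ t) :
    ∏ i ∈ t, x i ∣ ∏ k, x (j.succAbove k) := by
  rw [← Fin.coe_succAboveEmb, ← Finset.prod_map Finset.univ (Fin.succAboveEmb j) x]
  refine Finset.prod_dvd_prod_of_subset _ _ _ fun i hi => ?_
  obtain ⟨k, rfl⟩ := Fin.exists_succAbove_eq (ne_of_mem_of_not_mem hi hj)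
  exact Finset.mem_map_of_mem _ (Finset.mem_univ k)

theorem isNAbsorbing_span_multiset_prod {R : Type*} [CommRing R] [IsDomain R] {P : Multiset R}
    (hP : ∀ q ∈ P, Prime q) {n : ℕ} (hn : P.card ≤ n) :
    IsNAbsorbing n (Ideal.span {P.prod}) := by
  intro x hx
  rw [Ideal.mem_span_singleton] at hx
  obtain ⟨t, -, htcard, htdvd⟩ := exists_subset_card_le_multiset_prod_dvd hP hx
  obtain ⟨j, -, hjt⟩ := Finset.exists_mem_notMem_of_card_lt_card
    (s := t) (t := Finset.univ) (by rw [Finset.card_univ, Fintype.card_fin]; omega)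
  exact ⟨j.succAbove, Fin.strictMono_succAbove j,
    Ideal.mem_span_singleton.2 (htdvd.trans (Fin.prod_dvd_prod_succAbove x hjt))⟩

theorem not_isNAbsorbing_span_prod {R : Type*} [CommRing R] [IsDomain R] {k : ℕ}
    (x : Fin (k + 1) → R) (hx : ∀ i, ¬IsUnit (x i)) (hx0 : ∏ i, x i ≠ 0) :
    ¬IsNAbsorbing k (Ideal.span {∏ i, x i}) := by
  intro habs
  obtain ⟨ι, hι, hmem⟩ := habs x (Ideal.mem_span_singleton_self _)
  rw [Ideal.mem_span_singleton] at hmem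
  obtain ⟨j, -, hj⟩ := Finset.exists_mem_notMem_of_card_lt_card
    (s := Finset.univ.map ⟨ι, hι.injective⟩) (t := Finset.univ) (by simp)
  have hcofactor : ∏ i, x i ∣ ∏ l, x (j.succAbove l) :=
    hmem.trans (by simpa using Fin.prod_dvd_prod_succAbove x hj)
  rw [Fin.prod_univ_succAbove x j] at hcofactor hx0
  exact hx j (isUnit_iff_dvd_one.2 ((mul_dvd_mul_iff_right (right_ne_zero_of_mul hx0)).1
    (by rwa [one_mul])))

theorem Fin.exists_prod_eq_of_not_isUnit {M : Type*} [CommMonoid M] {k n : ℕ} (hkn : k < n)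
    (p : Fin n → M) (hp : ∀ i, ¬IsUnit (p i)) :
    ∃ x : Fin (k + 1) → M, ∏ i, x i = ∏ i, p i ∧ ∀ i, ¬IsUnit (x i) := by
  obtain ⟨d, rfl⟩ : ∃ d, n = k + (d + 1) := ⟨n - k - 1, by omega⟩
  refine ⟨Fin.snoc (fun i => p (Fin.castAdd (d + 1) i)) (∏ l, p (Fin.natAdd k l)), ?_, ?_⟩
  · simp [Fin.prod_univ_castSucc, Fin.prod_univ_add p]
  · refine Fin.lastCases ?_ fun i => by simpa using hp _
    rw [Fin.snoc_last, Fin.prod_univ_succ]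
    exact fun h => hp _ (isUnit_of_mul_isUnit_left h)

theorem omegaR_eq_of_isNAbsorbing {R : Type*} [CommRing R] {I : Ideal R} {n : ℕ} (hn : 0 < n)
    (habs : IsNAbsorbing n I) (hlt : ∀ k : ℕ, 1 ≤ k → k < n → ¬IsNAbsorbing k I) :
    omegaR I = n := by
  refine le_antisymm (sInf_le ⟨n, hn, rfl, habs⟩) (le_sInf ?_)
  rintro _ ⟨k, hk, rfl, hk_abs⟩
  exact_mod_cast not_lt.1 fun hkn => hlt k hk hkn hk_abs

/-- The ideal of `ℤ` generated by a product of `n` prime numbers has `ω` equal to `n`: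
it is `n`-absorbing but not `k`-absorbing for `1 ≤ k < n`. -/
theorem omegaR_span_prod_primes_int (n : ℕ) (hn : 0 < n)
    (p : Fin n → ℕ) (hp : ∀ i, Nat.Prime (p i)) :
    omegaR (Ideal.span {(∏ i, (p i : ℤ))}) = (n : ℕ∞) ∧
    IsNAbsorbing n (Ideal.span {(∏ i, (p i : ℤ))}) ∧
    ∀ k : ℕ, 1 ≤ k → k < n → ¬ IsNAbsorbing k (Ideal.span {(∏ i, (p i : ℤ))}) := by
  have hprime : ∀ i, Prime (p i : ℤ) := fun i => Nat.prime_iff_prime_int.1 (hp i)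
  have habs : IsNAbsorbing n (Ideal.span {(∏ i, (p i : ℤ))}) :=
    isNAbsorbing_span_multiset_prod (P := Finset.univ.val.map fun i => (p i : ℤ))
      (by simpa using hprime) (by simp)
  have hlt : ∀ k : ℕ, 1 ≤ k → k < n → ¬ IsNAbsorbing k (Ideal.span {(∏ i, (p i : ℤ))}) := by
    intro k _ hkn
    obtain ⟨x, hx, hxu⟩ := Fin.exists_prod_eq_of_not_isUnit hkn (fun i => (p i : ℤ))
      fun i => (hprime i).not_isUnit
    rw [← hx]
    exact not_isNAbsorbing_span_prod x hxu
      (hx ▸ Finset.prod_ne_zero_iff.2 fun i _ => (hprime i).ne_zero)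
  exact ⟨omegaR_eq_of_isNAbsorbing hn habs hlt, habs, hlt⟩
end

section
/- Let R be a commutative ring with exactly n maximal ideals, where n is a positive integer. Then {1, …, n} ⊆ Ω(R); that is, for every integer 1 ≤ k ≤ n there exists a proper ideal I of R with ω_R(I) = k. -/
open Finset

section

variable {R : Type*} [CommRing R]

theorem isNAbsorbing_iff_exists_prod_compl_mem {n : ℕ} {I : Ideal R} :
    IsNAbsorbing n I ↔
      ∀ x : Fin (n + 1) → R, ∏ i, x i ∈ I → ∃ p, ∏ i ∈ {p}ᶜ, x i ∈ I := by
  refine forall₂_congr fun x _ => ⟨?_, ?_⟩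
  · rintro ⟨ι, hι, hmem⟩
    obtain ⟨p, hp⟩ : ∃ p, (univ.image ι)ᶜ = {p} := by
      rw [← card_eq_one, card_compl, card_image_of_injective _ hι.injective]
      simp
    refine ⟨p, ?_⟩
    rwa [← hp, compl_compl, prod_image hι.injective.injOn]
  · rintro ⟨p, hp⟩
    refine ⟨p.succAbove, Fin.strictMono_succAbove p, ?_⟩
    rwa [← prod_image Fin.succAbove_right_injective.injOn, Fin.image_succAbove_univ]

theorem IsNAbsorbing.exists_ne_univ_prod_mem {n : ℕ} {I : Ideal R} (h : IsNAbsorbing n I)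
    {ι : Type*} [Fintype ι] (x : ι → R) (hn : n < Fintype.card ι) (hx : ∏ i, x i ∈ I) :
    ∃ s ≠ univ, ∏ i ∈ s, x i ∈ I := by
  classical
  -- group the factors into `n + 1` blocks along a surjection `ι → Fin (n + 1)`
  obtain ⟨e⟩ := Function.Embedding.nonempty_of_card_le (α := Fin (n + 1)) (β := ι) (by simpa)
  set g : ι → Fin (n + 1) := Function.invFun e
  have hg : Function.Surjective g := Function.invFun_surjective e.injective
  obtain ⟨p, hp⟩ := isNAbsorbing_iff_exists_prod_compl_mem.mp h
    (fun k => ∏ i ∈ univ.filter (g · = k), x i) (by rwa [prod_fiberwise])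
  rw [prod_fiberwise_eq_prod_filter] at hp
  refine ⟨_, fun hs => ?_, hp⟩
  obtain ⟨i, rfl⟩ := hg p
  simpa using hs.ge (mem_univ i)

theorem isNAbsorbing_iInf_of_card_le {n : ℕ} {ι : Type*} [Fintype ι] (P : ι → Ideal R)
    [∀ i, (P i).IsPrime] (hn : Fintype.card ι ≤ n) : IsNAbsorbing n (⨅ i, P i) := by
  rw [isNAbsorbing_iff_exists_prod_compl_mem]
  intro x hx
  have hfactor (i : ι) : ∃ k, x k ∈ P i := by
    obtain ⟨k, -, hk⟩ := Ideal.IsPrime.prod_mem_iff.mp (Ideal.mem_iInf.mp hx i)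
    exact ⟨k, hk⟩
  choose f hf using hfactor
  obtain ⟨p, hp⟩ : ∃ p, p ∉ Set.range f := by
    by_contra! h
    simpa using Fintype.card_le_of_surjective f h |>.trans hn
  exact ⟨p, Ideal.mem_iInf.mpr fun i =>
    Ideal.prod_mem _ (by simpa using fun h => hp ⟨i, h⟩) (hf i)⟩

theorem Ideal.exists_mem_forall_notMem_of_pairwise_not_le {ι : Type*} [Finite ι]
    (P : ι → Ideal R) [∀ i, (P i).IsPrime] (hP : Pairwise fun i j => ¬ P i ≤ P j) (i : ι) :
    ∃ a ∈ P i, ∀ j ≠ i, a ∉ P j := by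
  classical
  have := Fintype.ofFinite ι
  by_contra! h
  have hcover : (P i : Set R) ⊆ ⋃ j ∈ ((univ.erase i : Finset ι) : Set ι), (P j : Set R) :=
    fun a ha => by
      obtain ⟨j, hji, hj⟩ := h a ha
      exact Set.mem_biUnion (by simpa using hji) hj
  obtain ⟨j, hj, hle⟩ := (Ideal.subset_union_prime i i fun j _ _ _ => inferInstance).mp hcover
  exact hP (ne_of_mem_erase hj).symm hle

theorem not_isNAbsorbing_iInf_of_lt_card {n : ℕ} {ι : Type*} [Fintype ι] (P : ι → Ideal R)
    [∀ i, (P i).IsPrime] (hP : Pairwise fun i j => ¬ P i ≤ P j) (hn : n < Fintype.card ι) :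
    ¬ IsNAbsorbing n (⨅ i, P i) := by
  intro h
  choose a ha ha' using Ideal.exists_mem_forall_notMem_of_pairwise_not_le P hP
  have hprod : ∏ i, a i ∈ ⨅ i, P i :=
    Ideal.mem_iInf.mpr fun i => Ideal.prod_mem _ (mem_univ i) (ha i)
  obtain ⟨s, hs, hmem⟩ := h.exists_ne_univ_prod_mem a hn hprod
  obtain ⟨i, hi⟩ : ∃ i, i ∉ s := by
    by_contra! h
    exact hs (eq_univ_of_forall h)
  obtain ⟨j, hj, haj⟩ := Ideal.IsPrime.prod_mem_iff.mp (Ideal.mem_iInf.mp hmem i)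
  exact ha' j i ((ne_of_mem_of_not_mem hj hi).symm) haj

theorem omegaR_iInf_eq_card {ι : Type*} [Fintype ι] [Nonempty ι] (P : ι → Ideal R)
    [∀ i, (P i).IsPrime] (hP : Pairwise fun i j => ¬ P i ≤ P j) :
    omegaR (⨅ i, P i) = Fintype.card ι := by
  refine le_antisymm (sInf_le ⟨_, Fintype.card_pos, rfl, isNAbsorbing_iInf_of_card_le P le_rfl⟩)
    (le_sInf ?_)
  rintro _ ⟨n, -, rfl, hn⟩
  exact Nat.cast_le.mpr (not_lt.mp fun h => not_isNAbsorbing_iInf_of_lt_card P hP h hn)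

end

theorem mem_omega_of_card_maximal_general {R : Type*} [CommRing R] (n : ℕ)
    (hcard : {I : Ideal R | I.IsMaximal}.ncard = n) :
    ∀ k : ℕ, 1 ≤ k → k ≤ n → ∃ I : Ideal R, I ≠ ⊤ ∧ omegaR I = (k : ℕ∞) := by
  intro k hk hkn
  obtain ⟨S, hSmax, hSk⟩ := Set.exists_subset_card_eq (hcard ▸ hkn)
  have : Fintype S := (Set.finite_of_ncard_pos (hSk ▸ hk)).fintype
  have (M : S) : (M : Ideal R).IsPrime := (hSmax M.2).isPrime
  have hS : Pairwise fun M N : S => ¬ (M : Ideal R) ≤ N := fun M N hMN hle =>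
    hMN (Subtype.ext ((hSmax M.2).eq_of_le (hSmax N.2).ne_top hle))
  obtain ⟨M, hM⟩ := Set.nonempty_of_ncard_ne_zero (s := S) (by omega)
  have : Nonempty S := ⟨⟨M, hM⟩⟩
  refine ⟨⨅ N : S, N, ne_top_of_le_ne_top (hSmax hM).ne_top
    (iInf_le (fun N : S => (N : Ideal R)) ⟨M, hM⟩), ?_⟩
  rw [omegaR_iInf_eq_card _ hS, ← Nat.card_eq_fintype_card, Nat.card_coe_set_eq, hSk]

/-- If `R` has exactly `n` maximal ideals, then every `k` with `1 ≤ k ≤ n` is the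
`ω`-value of some proper ideal of `R`. -/
theorem mem_omega_of_card_maximal {R : Type*} [CommRing R] (n : ℕ) (hn : 0 < n)
    (hfin : {I : Ideal R | I.IsMaximal}.Finite)
    (hcard : {I : Ideal R | I.IsMaximal}.ncard = n) :
    ∀ k : ℕ, 1 ≤ k → k ≤ n → ∃ I : Ideal R, I ≠ ⊤ ∧ omegaR I = (k : ℕ∞) :=
  mem_omega_of_card_maximal_general n hcard
end

section
/- Let R be a commutative ring with infinitely many maximal ideals. Then ℕ ⊆ Ω(R); that is, for every positive integer k there exists a proper ideal I of R with ω_R(I) = k. -/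
private lemma prod_mem_of_factor_mem {R ι : Type*} [CommRing R] [DecidableEq ι] {I : Ideal R} {s : Finset ι}
    {f : ι → R} {i : ι} (hi : i ∈ s) (h : f i ∈ I) : ∏ j ∈ s, f j ∈ I := by
  rw [← Finset.prod_erase_mul s f hi]
  exact I.mul_mem_left _ h

private lemma one_sub_prod_mem {R ι : Type*} [CommRing R] {I : Ideal R} {s : Finset ι}
    {f : ι → R} (h : ∀ j ∈ s, 1 - f j ∈ I) : 1 - ∏ j ∈ s, f j ∈ I := by
  have h1 : Ideal.Quotient.mk I (1 : R) = Ideal.Quotient.mk I (∏ j ∈ s, f j) := by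
    rw [map_prod, map_one]
    refine (Finset.prod_eq_one fun j hj => ?_).symm
    have := (Ideal.Quotient.eq (I := I)).mpr (h j hj)
    rw [map_one] at this
    exact this.symm
  exact (Ideal.Quotient.eq (I := I)).mp h1

/-- If `R` has infinitely many maximal ideals, then every positive integer is the
`ω`-value of some proper ideal of `R`. -/
theorem mem_omega_of_infinite_maximal {R : Type*} [CommRing R]
    (hinf : {I : Ideal R | I.IsMaximal}.Infinite) :
    ∀ k : ℕ, 0 < k → ∃ I : Ideal R, I ≠ ⊤ ∧ omegaR I = (k : ℕ∞) := by
  intro k hk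
  have : Infinite {I : Ideal R | I.IsMaximal} := hinf.to_subtype
  let e := Infinite.natEmbedding {I : Ideal R | I.IsMaximal}
  set M : Fin k → Ideal R := fun i => (e i.val).1 with hMdef
  have hmax : ∀ i, (M i).IsMaximal := fun i => (e i.val).2
  have hprime : ∀ i, (M i).IsPrime := fun i => (hmax i).isPrime
  have hne : ∀ {i j : Fin k}, i ≠ j → M i ≠ M j := by
    intro i j hij h
    exact hij (Fin.val_injective (e.injective (Subtype.ext h)))
  set I : Ideal R := ⨅ i, M i with hIdef
  have hIle : ∀ i, I ≤ M i := fun i => iInf_le _ i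
  have hItop : I ≠ ⊤ := by
    intro h
    exact (hmax ⟨0, hk⟩).ne_top (top_le_iff.mp (h ▸ hIle ⟨0, hk⟩))
  -- choose s i j ∈ M j with 1 - s i j ∈ M i, for i ≠ j
  have hsex : ∀ i j : Fin k, ∃ x : R, i ≠ j → x ∈ M j ∧ 1 - x ∈ M i := by
    intro i j
    by_cases hij : i ≠ j
    · have hsup := (hmax j).coprime_of_ne (hmax i) (hne (Ne.symm hij))
      have hone : (1 : R) ∈ M j ⊔ M i := hsup ▸ Submodule.mem_top
      obtain ⟨u, hu, v, hv, huv⟩ := Submodule.mem_sup.mp hone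
      have h1 : (1 : R) - u = v := by linear_combination huv.symm
      exact ⟨u, fun _ => ⟨hu, h1 ▸ hv⟩⟩
    · exact ⟨0, fun h => absurd h hij⟩
  choose s hs using hsex
  set a : Fin k → R := fun i => 1 - ∏ j ∈ Finset.univ.erase i, s i j with hadef
  have ha1 : ∀ i, a i ∈ M i := by
    intro i
    exact one_sub_prod_mem fun j hj => (hs i j (Finset.ne_of_mem_erase hj).symm).2
  have ha2 : ∀ i j, i ≠ j → a i ∉ M j := by
    intro i j hij hmem
    have hprod : ∏ l ∈ Finset.univ.erase i, s i l ∈ M j :=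
      prod_mem_of_factor_mem (Finset.mem_erase.mpr ⟨hij.symm, Finset.mem_univ j⟩)
        (hs i j hij).1
    have h1 : (1 : R) ∈ M j := by
      have := Ideal.add_mem _ hmem hprod
      simpa [hadef] using this
    exact (hmax j).ne_top ((Ideal.eq_top_iff_one _).mpr h1)
  -- I is k-absorbing
  have habs : IsNAbsorbing k I := by
    intro x hx
    have hf : ∀ i : Fin k, ∃ t : Fin (k + 1), x t ∈ M i := by
      intro i
      have h1 : ∏ t, x t ∈ M i := hIle i hx
      obtain ⟨t, _, ht⟩ := (Ideal.IsPrime.prod_mem_iff (hp := hprime i)).mp h1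
      exact ⟨t, ht⟩
    choose f hf using hf
    have hnsurj : ¬ Function.Surjective f := by
      intro h
      have := Fintype.card_le_of_surjective f h
      simp at this
    simp only [Function.Surjective, not_forall, not_exists] at hnsurj
    obtain ⟨t, ht⟩ := hnsurj
    refine ⟨t.succAbove, Fin.strictMono_succAbove t, ?_⟩
    refine (Submodule.mem_iInf _).mpr fun i => ?_
    obtain ⟨j, hj⟩ := Fin.exists_succAbove_eq (ht i)
    exact prod_mem_of_factor_mem (Finset.mem_univ j) (by rw [hj]; exact hf i)
  -- I is not n-absorbing for 0 < n < k
  have hnot : ∀ n : ℕ, 0 < n → n < k → ¬ IsNAbsorbing n I := by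
    intro n hn hnk hab
    set g : Fin k → Fin (n + 1) := fun j => ⟨min j.val n, by omega⟩ with hg
    set x : Fin (n + 1) → R :=
      fun i => ∏ j ∈ Finset.univ.filter (fun j => g j = i), a j with hx
    have hprodx : ∏ i, x i = ∏ j, a j := by
      simpa [hx] using Finset.prod_fiberwise Finset.univ g a
    have hmem : ∏ i, x i ∈ I := by
      rw [hprodx]
      exact (Submodule.mem_iInf _).mpr fun i =>
        prod_mem_of_factor_mem (Finset.mem_univ i) (ha1 i)
    obtain ⟨ι, hι, hprodmem⟩ := hab x hmem
    have hnsurj : ¬ Function.Surjective ι := by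
      intro h
      have := Fintype.card_le_of_surjective ι h
      simp at this
    simp only [Function.Surjective, not_forall, not_exists] at hnsurj
    obtain ⟨t, ht⟩ := hnsurj
    have htk : (t : ℕ) < k := lt_of_lt_of_le t.isLt hnk
    set t' : Fin k := ⟨t, htk⟩ with ht'
    have hgt' : g t' = t := by
      have : (t : ℕ) ≤ n := Nat.lt_succ_iff.mp t.isLt
      simp [hg, ht']
      exact Fin.ext (by simpa using Nat.min_eq_left this)
    have hfac : ∀ i : Fin (n + 1), i ≠ t → x i ∉ M t' := by
      intro i hi hmemi
      rw [hx] at hmemi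
      obtain ⟨j, hj, hjm⟩ := (Ideal.IsPrime.prod_mem_iff (hp := hprime t')).mp hmemi
      have hj' : g j = i := (Finset.mem_filter.mp hj).2
      have hjt : j ≠ t' := fun h => hi (by rw [← hj', h, hgt'])
      exact ha2 j t' hjt hjm
    have hnotin : ∏ j, x (ι j) ∉ M t' := by
      intro hmemp
      obtain ⟨j, _, hjm⟩ := (Ideal.IsPrime.prod_mem_iff (hp := hprime t')).mp hmemp
      exact hfac (ι j) (ht j) hjm
    exact hnotin (hIle t' hprodmem)
  refine ⟨I, hItop, ?_⟩
  refine le_antisymm (sInf_le ⟨k, hk, rfl, habs⟩) ?_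
  refine le_sInf fun w hw => ?_
  obtain ⟨n, hn, rfl, hab⟩ := hw
  by_contra h
  push_neg at h
  have hnk : n < k := by exact_mod_cast h
  exact hnot n hn hnk hab
end

section
/- Let R be a nontrivial artinian commutative ring. Then there exists a positive integer n such that Ω(R) = {1, …, n}. In particular, Ω(R) = {1} if and only if R is a field. -/
/-- `Ω(R)` is the set of `ω`-values of proper ideals of `R`. -/
noncomputable def OmegaSet (R : Type*) [CommRing R] : Set ℕ∞ :=
  {w | ∃ I : Ideal R, I ≠ ⊤ ∧ omegaR I = w}

/-!
We work with the equivalent multiset form of `n`-absorbing: whenever a finite product lies in `I`,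
so does a subproduct of at most `n` of its factors.

In an artinian ring the nilradical is nilpotent, say of index `N`, and it is the intersection of
the finitely many maximal ideals `M`; since the `M ^ N` are pairwise coprime, every ideal is
`I = ⨅ M, (I ⊔ M ^ N)`. Each `I ⊔ M ^ N` is `⊤` or `M`-primary, hence `N`-absorbing, and
absorbing degrees add under intersection, so `ω` is bounded on proper ideals and `Ω(R)` is finite.

`Ω(R)` is closed under predecessors: if `x₀ ⋯ x_{n+1} ∈ I` but no proper subproduct is, the colon
ideal `(I : x₀)` strictly contains `I`, is still `(n + 2)`-absorbing, and `x₁ ⋯ x_{n+1}` shows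
that it is not `n`-absorbing. Repeating this climbs an ascending chain, which stops in a noetherian
ring at an ideal of `ω`-value `n + 1`. Finally `ω(I) = 1` means exactly that `I` is prime, so
`Ω(R) = {1}` makes `⊥` prime, and an artinian domain is a field.
-/
namespace Multiset

variable {α M : Type*}

theorem le_cons_or {a : α} {s t : Multiset α} (h : s ≤ a ::ₘ t) :
    s ≤ t ∨ ∃ u ≤ t, s = a ::ₘ u := by
  classical
  by_cases ha : a ∈ s
  · obtain ⟨u, rfl⟩ := exists_cons_of_mem ha
    exact .inr ⟨u, (cons_le_cons_iff a).mp h, rfl⟩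
  · exact .inl ((le_cons_of_notMem ha).mp h)

theorem exists_le_card_eq {s : Multiset α} {n : ℕ} (h : n ≤ card s) : ∃ t ≤ s, card t = n := by
  obtain ⟨l, rfl⟩ : ∃ l : List α, ↑l = s := Quotient.exists_rep s
  exact ⟨l.take n, (List.take_sublist n l).subperm, by simpa using h⟩

theorem exists_fin_map_eq {s : Multiset α} {n : ℕ} (h : card s = n) :
    ∃ x : Fin n → α, Finset.univ.val.map x = s := by
  obtain ⟨l, rfl⟩ : ∃ l : List α, ↑l = s := Quotient.exists_rep s
  obtain rfl : l.length = n := by simpa using h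
  exact ⟨l.get, by rw [Fin.univ_val_map, List.ofFn_get]⟩

theorem exists_le_cons_cons_of_le_cons_mul [CommMonoid M] {a b : M} {r s : Multiset M}
    (h : s ≤ (a * b) ::ₘ r) :
    ∃ t ≤ a ::ₘ b ::ₘ r, card t ≤ card s + 1 ∧ t.prod = s.prod := by
  obtain h | ⟨u, hu, rfl⟩ := le_cons_or h
  · exact ⟨s, h.trans ((le_cons_self _ _).trans (le_cons_self _ _)), by omega, rfl⟩
  · exact ⟨a ::ₘ b ::ₘ u, cons_le_cons a (cons_le_cons b hu), by simp, by simp [mul_assoc]⟩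

theorem map_univ_eq_cons_map_succAbove {n : ℕ} (x : Fin (n + 1) → α) (i : Fin (n + 1)) :
    Finset.univ.val.map x = x i ::ₘ Finset.univ.val.map (x ∘ i.succAbove) := by
  rw [Fin.univ_succAbove n i]
  simp [Finset.map_val, Function.comp_def]

end Multiset

section Absorbing

open Multiset

variable {R : Type*} [CommRing R] {m n : ℕ} {I : Ideal R}

theorem isNAbsorbing_iff_card_eq : IsNAbsorbing n I ↔
    ∀ m : Multiset R, card m = n + 1 → m.prod ∈ I → ∃ m' ≤ m, card m' ≤ n ∧ m'.prod ∈ I := by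
  simp only [IsNAbsorbing, Finset.prod_eq_multiset_prod]
  constructor
  · intro h m hm hmI
    obtain ⟨x, rfl⟩ := exists_fin_map_eq hm
    obtain ⟨ι, hι, hιI⟩ := h x hmI
    refine ⟨(Finset.univ.map ⟨ι, hι.injective⟩).val.map x,
      map_le_map (Finset.val_le_iff.mpr (Finset.subset_univ _)), by simp, ?_⟩
    simpa [Function.comp_def] using hιI
  · intro h x hx
    obtain ⟨m', hle, hcard, hm'I⟩ := h _ (by simp) hx
    obtain ⟨a, ha⟩ := lt_iff_cons_le.mp (hle.lt_of_ne (by rintro rfl; simp at hcard))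
    obtain ⟨i, -, rfl⟩ := mem_map.mp (mem_of_le ha (mem_cons_self _ _))
    rw [map_univ_eq_cons_map_succAbove x i, cons_le_cons_iff] at ha
    exact ⟨i.succAbove, Fin.strictMono_succAbove i, by
      simpa [Function.comp_def] using Ideal.mem_of_dvd _ (prod_dvd_prod_of_le ha) hm'I⟩

theorem IsNAbsorbing.exists_le_card_le (h : IsNAbsorbing n I) {m : Multiset R}
    (hm : m.prod ∈ I) : ∃ m' ≤ m, card m' ≤ n ∧ m'.prod ∈ I := by
  have small : ∀ m : Multiset R, card m ≤ n + 1 → m.prod ∈ I →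
      ∃ m' ≤ m, card m' ≤ n ∧ m'.prod ∈ I := fun m hcard hm => by
    obtain hcard | hcard := hcard.lt_or_eq
    · exact ⟨m, le_rfl, Nat.lt_succ_iff.mp hcard, hm⟩
    · exact isNAbsorbing_iff_card_eq.mp h m hcard hm
  induction hk : card m using Nat.strong_induction_on generalizing m with
  | _ k ih =>
  obtain hle | hlt := le_or_gt k (n + 1)
  · exact small m (hk ▸ hle) hm
  obtain ⟨a, ha⟩ := card_pos_iff_exists_mem.mp (by omega : 0 < card m)
  obtain ⟨s, rfl⟩ := exists_cons_of_mem ha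
  obtain ⟨b, hb⟩ := card_pos_iff_exists_mem.mp (by rw [card_cons] at hk; omega : 0 < card s)
  obtain ⟨r, rfl⟩ := exists_cons_of_mem hb
  -- merging `a` and `b` into one factor lowers the number of factors
  obtain ⟨m₁, hm₁, hcard₁, hm₁I⟩ := ih (card r + 1) (by rw [card_cons, card_cons] at hk; omega)
    (by simpa [mul_assoc] using hm : ((a * b) ::ₘ r).prod ∈ I) (by simp)
  obtain ⟨m₂, hm₂, hcard₂, hprod⟩ := exists_le_cons_cons_of_le_cons_mul hm₁
  obtain ⟨m₃, hm₃, hcard₃, hm₃I⟩ := small m₂ (by omega) (hprod ▸ hm₁I)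
  exact ⟨m₃, hm₃.trans hm₂, hcard₃, hm₃I⟩

theorem isNAbsorbing_iff : IsNAbsorbing n I ↔
    ∀ m : Multiset R, m.prod ∈ I → ∃ m' ≤ m, card m' ≤ n ∧ m'.prod ∈ I :=
  ⟨fun h _ => h.exists_le_card_le, fun h => isNAbsorbing_iff_card_eq.mpr fun m _ => h m⟩

theorem isNAbsorbing_top (n : ℕ) : IsNAbsorbing n (⊤ : Ideal R) :=
  isNAbsorbing_iff.mpr fun _ _ => ⟨0, zero_le _, by simp, trivial⟩

theorem isNAbsorbing_zero_iff : IsNAbsorbing 0 I ↔ I = ⊤ := by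
  refine ⟨fun h => ?_, fun h => h ▸ isNAbsorbing_top 0⟩
  obtain ⟨m', -, hcard, hm'I⟩ := isNAbsorbing_iff.mp h {0} (by simp)
  rw [card_eq_zero.mp (Nat.le_zero.mp hcard), prod_zero] at hm'I
  exact (Ideal.eq_top_iff_one I).mpr hm'I

theorem IsNAbsorbing.mono (h : IsNAbsorbing m I) (hmn : m ≤ n) : IsNAbsorbing n I :=
  isNAbsorbing_iff.mpr fun _ hs =>
    let ⟨t, hts, hcard, htI⟩ := h.exists_le_card_le hs
    ⟨t, hts, hcard.trans hmn, htI⟩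

theorem IsNAbsorbing.colon (h : IsNAbsorbing n I) (a : R) :
    IsNAbsorbing n (I.colon (Ideal.span {a})) := by
  refine isNAbsorbing_iff.mpr fun s hs => ?_
  rw [Ideal.mem_colon_span_singleton, mul_comm, ← prod_cons] at hs
  obtain ⟨t, hts, hcard, htI⟩ := h.exists_le_card_le hs
  obtain hts | ⟨u, hus, rfl⟩ := le_cons_or hts
  · exact ⟨t, hts, hcard, Ideal.mem_colon_span_singleton.mpr (I.mul_mem_right a htI)⟩
  · refine ⟨u, hus, by rw [card_cons] at hcard; omega, ?_⟩
    rwa [Ideal.mem_colon_span_singleton, mul_comm, ← prod_cons]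

theorem isNAbsorbing_iInf_s11 {ι : Type*} [Fintype ι] {J : ι → Ideal R}
    (h : ∀ i, IsNAbsorbing n (J i)) : IsNAbsorbing (Fintype.card ι * n) (⨅ i, J i) := by
  classical
  refine isNAbsorbing_iff.mpr fun s hs => ?_
  choose t hts hcard htJ using fun i => (h i).exists_le_card_le (Ideal.mem_iInf.mp hs i)
  refine ⟨Finset.univ.sup t, Finset.sup_le fun i _ => hts i, ?_, Ideal.mem_iInf.mpr fun i =>
    Ideal.mem_of_dvd _ (prod_dvd_prod_of_le (Finset.le_sup (Finset.mem_univ i))) (htJ i)⟩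
  calc card (Finset.univ.sup t) ≤ card (∑ i, t i) :=
        card_le_card (Finset.sup_le fun i _ =>
          Finset.single_le_sum (fun _ _ => zero_le _) (Finset.mem_univ i))
    _ = ∑ i, card (t i) := map_sum cardHom t _
    _ ≤ ∑ _i : ι, n := Finset.sum_le_sum fun i _ => hcard i
    _ = Fintype.card ι * n := by simp

end Absorbing

namespace Ideal

open Function

variable {R : Type*} [CommRing R]

theorem multiset_prod_mem_pow {M : Ideal R} {s : Multiset R} (h : ∀ x ∈ s, x ∈ M) :
    s.prod ∈ M ^ Multiset.card s := by
  induction s using Multiset.induction_on with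
  | empty => simp
  | cons a s ih =>
    rw [Multiset.prod_cons, Multiset.card_cons, pow_succ']
    exact mul_mem_mul (h a (Multiset.mem_cons_self a s))
      (ih fun x hx => h x (Multiset.mem_cons_of_mem hx))

theorem prod_sup_le_sup_prod {ι : Type*} (I : Ideal R) (s : Finset ι) (J : ι → Ideal R) :
    ∏ i ∈ s, (I ⊔ J i) ≤ I ⊔ ∏ i ∈ s, J i := by
  classical
  induction s using Finset.induction_on with
  | empty => simp
  | insert a s ha ih =>
    rw [Finset.prod_insert ha, Finset.prod_insert ha]
    calc (I ⊔ J a) * ∏ i ∈ s, (I ⊔ J i) ≤ (I ⊔ J a) * (I ⊔ ∏ i ∈ s, J i) := mul_mono_right ih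
      _ ≤ I ⊔ J a * ∏ i ∈ s, J i := by
        rw [sup_mul, mul_sup, mul_sup]
        exact sup_le (sup_le (mul_le_right.trans le_sup_left) (mul_le_left.trans le_sup_left))
          (sup_le (mul_le_right.trans le_sup_left) le_sup_right)

theorem iInf_sup_eq_sup_iInf {ι : Type*} [Fintype ι] {J : ι → Ideal R}
    (hJ : Pairwise (IsCoprime on J)) (I : Ideal R) : ⨅ i, (I ⊔ J i) = I ⊔ ⨅ i, J i := by
  have prod_eq_iInf {K : ι → Ideal R} (hK : Pairwise (IsCoprime on K)) : ∏ i, K i = ⨅ i, K i := by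
    simpa using prod_eq_iInf_of_pairwise_isCoprime (s := Finset.univ) fun i _ j _ hij => hK hij
  have hIJ : Pairwise (IsCoprime on fun i => I ⊔ J i) := fun i j hij =>
    isCoprime_iff_sup_eq.mpr (eq_top_mono (sup_le_sup le_sup_right le_sup_right) (hJ hij).sup_eq)
  refine le_antisymm ?_ (le_iInf fun i => sup_le_sup_left (iInf_le J i) I)
  rw [← prod_eq_iInf hJ, ← prod_eq_iInf hIJ]
  exact prod_sup_le_sup_prod I _ J

end Ideal

section Primary

open Multiset

variable {R : Type*} [CommRing R] {n : ℕ}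

theorem Ideal.IsPrimary.isNAbsorbing {Q : Ideal R} (hQ : Q.IsPrimary) (h : Q.radical ^ n ≤ Q) :
    IsNAbsorbing n Q := by
  classical
  refine isNAbsorbing_iff.mpr fun s hs => ?_
  rw [← filter_add_not (· ∈ Q.radical) s, prod_add] at hs
  have hout : (s.filter (· ∉ Q.radical)).prod ∉ Q.radical := by
    rw [(Ideal.isPrime_radical hQ).multiset_prod_mem_iff_exists_mem]
    simp
  have hin : (s.filter (· ∈ Q.radical)).prod ∈ Q :=
    ((Ideal.isPrimary_iff.mp hQ).2 hs).resolve_right hout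
  obtain hcard | hcard := le_or_gt (card (s.filter (· ∈ Q.radical))) n
  · exact ⟨_, filter_le _ _, hcard, hin⟩
  obtain ⟨t, hts, rfl⟩ := exists_le_card_eq hcard.le
  exact ⟨t, hts.trans (filter_le _ _), le_rfl,
    h (Ideal.multiset_prod_mem_pow fun x hx => (mem_filter.mp (mem_of_le hts hx)).2)⟩

theorem Ideal.IsMaximal.isNAbsorbing_of_pow_le {M I : Ideal R} (hM : M.IsMaximal) (h : M ^ n ≤ I) :
    IsNAbsorbing n I := by
  by_cases hI : I = ⊤
  · exact hI ▸ isNAbsorbing_top n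
  have hrad : I.radical = M := (hM.eq_of_le (Ideal.radical_eq_top.not.mpr hI)
    fun x hx => ⟨n, h (Ideal.pow_mem_pow hx n)⟩).symm
  exact (Ideal.isPrimary_of_isMaximal_radical (hrad ▸ hM)).isNAbsorbing (hrad ▸ h)

theorem exists_forall_isNAbsorbing (R : Type*) [CommRing R] [IsArtinianRing R] :
    ∃ N, ∀ I : Ideal R, IsNAbsorbing N I := by
  obtain ⟨N, hN⟩ := IsArtinianRing.isNilpotent_nilradical (R := R)
  have := Fintype.ofFinite (MaximalSpectrum R)
  refine ⟨Fintype.card (MaximalSpectrum R) * N, fun I => ?_⟩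
  have hI : ⨅ M : MaximalSpectrum R, (I ⊔ M.asIdeal ^ N) = I := by
    rw [Ideal.iInf_sup_eq_sup_iInf (fun M M' h => (M.isCoprime_of_ne h).pow),
      ← IsArtinianRing.nilradical_pow_eq_iInf, hN, Ideal.zero_eq_bot, sup_bot_eq]
  rw [← hI]
  exact isNAbsorbing_iInf_s11 fun M => M.isMaximal.isNAbsorbing_of_pow_le le_sup_right

end Primary

section Descent

open Multiset

variable {R : Type*} [CommRing R] {n : ℕ} {I : Ideal R}

theorem IsNAbsorbing.exists_minimal_prod_mem (h : IsNAbsorbing (n + 1) I)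
    (h' : ¬ IsNAbsorbing n I) :
    ∃ m : Multiset R, card m = n + 1 ∧ m.prod ∈ I ∧ ∀ m' < m, m'.prod ∉ I := by
  obtain ⟨m, hmI, hwit⟩ :
      ∃ m : Multiset R, m.prod ∈ I ∧ ∀ m' ≤ m, card m' ≤ n → m'.prod ∉ I := by
    simpa [isNAbsorbing_iff] using h'
  obtain ⟨m₀, hm₀, hcard, hm₀I⟩ := h.exists_le_card_le hmI
  have : ¬ card m₀ ≤ n := fun hle => hwit m₀ hm₀ hle hm₀I
  exact ⟨m₀, by omega, hm₀I, fun m' hlt =>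
    hwit m' (hlt.le.trans hm₀) (by have := card_lt_card hlt; omega)⟩

theorem exists_lt_colon_not_isNAbsorbing (h : IsNAbsorbing (n + 2) I)
    (h' : ¬ IsNAbsorbing (n + 1) I) :
    ∃ a : R, I < I.colon (Ideal.span {a}) ∧ ¬ IsNAbsorbing n (I.colon (Ideal.span {a})) := by
  obtain ⟨m, hcard, hmI, hmin⟩ := h.exists_minimal_prod_mem h'
  obtain ⟨a, ha⟩ := card_pos_iff_exists_mem.mp (by omega : 0 < card m)
  obtain ⟨r, rfl⟩ := exists_cons_of_mem ha
  have mem_colon {s : Multiset R} : s.prod ∈ I.colon (Ideal.span {a}) ↔ (a ::ₘ s).prod ∈ I := by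
    rw [Ideal.mem_colon_span_singleton, mul_comm, prod_cons]
  refine ⟨a, SetLike.lt_iff_le_and_exists.mpr ⟨fun x hx => Ideal.mem_colon_span_singleton.mpr
    (I.mul_mem_right a hx), r.prod, mem_colon.mpr hmI, hmin r (lt_cons_self r a)⟩, fun habs => ?_⟩
  obtain ⟨t, htr, htcard, htI⟩ := habs.exists_le_card_le (mem_colon.mpr hmI)
  refine hmin (a ::ₘ t) ((cons_lt_cons_iff).mpr (htr.lt_of_ne ?_)) (mem_colon.mp htI)
  rintro rfl
  rw [card_cons] at hcard
  omega

theorem exists_isNAbsorbing_succ_not_isNAbsorbing [IsNoetherianRing R]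
    (h : IsNAbsorbing (n + 2) I) (h' : ¬ IsNAbsorbing n I) :
    ∃ J : Ideal R, IsNAbsorbing (n + 1) J ∧ ¬ IsNAbsorbing n J := by
  induction I using WellFoundedGT.induction with
  | _ I ih =>
  by_cases h₁ : IsNAbsorbing (n + 1) I
  · exact ⟨I, h₁, h'⟩
  obtain ⟨a, hlt, ha⟩ := exists_lt_colon_not_isNAbsorbing h h₁
  exact ih _ hlt (h.colon a) ha

end Descent

section Omega

variable {R : Type*} [CommRing R] {n : ℕ} {I : Ideal R}

theorem isNAbsorbing_one_iff (hI : I ≠ ⊤) : IsNAbsorbing 1 I ↔ I.IsPrime := by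
  constructor
  · refine fun h => ⟨hI, fun {a b} hab => ?_⟩
    obtain ⟨ι, -, hι⟩ := h ![a, b] (by simpa using hab)
    rw [Fin.prod_univ_one] at hι
    generalize ι 0 = i at hι
    fin_cases i
    exacts [.inl (by simpa using hι), .inr (by simpa using hι)]
  · intro hP x hx
    rw [Fin.prod_univ_two] at hx
    have hmono (i : Fin 2) : StrictMono fun _ : Fin 1 => i :=
      fun a b hab => absurd (Subsingleton.elim a b) hab.ne
    rcases hP.mem_or_mem hx with h0 | h1
    · exact ⟨_, hmono 0, by simpa using h0⟩
    · exact ⟨_, hmono 1, by simpa using h1⟩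

theorem omegaR_eq_coe_iff (hI : I ≠ ⊤) :
    omegaR I = n ↔ IsNAbsorbing n I ∧ ∀ m < n, ¬ IsNAbsorbing m I := by
  have pos {m : ℕ} (h : IsNAbsorbing m I) : 0 < m :=
    Nat.pos_of_ne_zero fun h0 => hI (isNAbsorbing_zero_iff.mp (h0 ▸ h))
  constructor
  · intro hω
    have hne : {w : ℕ∞ | ∃ n : ℕ, 0 < n ∧ w = n ∧ IsNAbsorbing n I}.Nonempty := by
      by_contra he
      simp [omegaR, Set.not_nonempty_iff_eq_empty.mp he] at hω
    obtain ⟨k, -, hk, habs⟩ := csInf_mem hne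
    obtain rfl : k = n := by exact_mod_cast hk.symm.trans hω
    refine ⟨habs, fun m hm hm' => ?_⟩
    have : omegaR I ≤ m := sInf_le ⟨m, pos hm', rfl, hm'⟩
    rw [hω] at this
    exact absurd (by exact_mod_cast this) (not_le.mpr hm)
  · rintro ⟨habs, hmin⟩
    refine le_antisymm (sInf_le ⟨n, pos habs, rfl, habs⟩) (le_sInf ?_)
    rintro _ ⟨m, -, rfl, hm⟩
    exact_mod_cast not_lt.mp fun hlt => hmin m hlt hm

theorem omegaR_eq_one_iff (hI : I ≠ ⊤) : omegaR I = 1 ↔ I.IsPrime := by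
  rw [← Nat.cast_one, omegaR_eq_coe_iff hI, ← isNAbsorbing_one_iff hI]
  simp [isNAbsorbing_zero_iff, hI]

theorem exists_omegaR_eq (hI : I ≠ ⊤) (h : IsNAbsorbing n I) :
    ∃ k : ℕ, 1 ≤ k ∧ k ≤ n ∧ omegaR I = k := by
  classical
  have hex : ∃ k, IsNAbsorbing k I := ⟨n, h⟩
  exact ⟨Nat.find hex, (Nat.find_pos hex).mpr fun h0 => hI (isNAbsorbing_zero_iff.mp h0),
    Nat.find_min' hex h, (omegaR_eq_coe_iff hI).mpr ⟨Nat.find_spec hex, fun _ => Nat.find_min hex⟩⟩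

variable (R) in
theorem one_mem_omegaSet [Nontrivial R] : (1 : ℕ∞) ∈ OmegaSet R := by
  obtain ⟨M, hM⟩ := Ideal.exists_maximal R
  exact ⟨M, hM.ne_top, (omegaR_eq_one_iff hM.ne_top).mpr hM.isPrime⟩

theorem mem_omegaSet_of_succ_mem [IsNoetherianRing R] {k : ℕ}
    (h : ((k + 2 : ℕ) : ℕ∞) ∈ OmegaSet R) : ((k + 1 : ℕ) : ℕ∞) ∈ OmegaSet R := by
  obtain ⟨I, hI, hω⟩ := h
  obtain ⟨habs, hmin⟩ := (omegaR_eq_coe_iff hI).mp hω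
  obtain ⟨J, hJ, hJ'⟩ := exists_isNAbsorbing_succ_not_isNAbsorbing habs (hmin k (by omega))
  have hJtop : J ≠ ⊤ := fun h => hJ' (h ▸ isNAbsorbing_top k)
  exact ⟨J, hJtop, (omegaR_eq_coe_iff hJtop).mpr ⟨hJ, fun m hm hm' => hJ' (hm'.mono (by omega))⟩⟩

variable (R) in
theorem omegaSet_eq_singleton_one_iff [Nontrivial R] [IsArtinianRing R] :
    OmegaSet R = {1} ↔ IsField R := by
  constructor
  · intro h
    have : omegaR (⊥ : Ideal R) = 1 := h.subset ⟨⊥, bot_ne_top, rfl⟩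
    have := (omegaR_eq_one_iff bot_ne_top).mp this
    have := IsDomain.of_bot_isPrime R
    exact IsArtinianRing.isField_of_isDomain R
  · intro hF
    let := hF.toField
    refine Set.eq_singleton_iff_unique_mem.mpr ⟨one_mem_omegaSet R, ?_⟩
    rintro _ ⟨I, hI, rfl⟩
    rw [(Ideal.eq_bot_or_top I).resolve_right hI]
    exact (omegaR_eq_one_iff bot_ne_top).mpr Ideal.isPrime_bot

end Omega

theorem ENat.exists_eq_initial_segment_of_pred_mem {S : Set ℕ∞} {N : ℕ} (h1 : (1 : ℕ∞) ∈ S)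
    (hS : ∀ w ∈ S, ∃ k : ℕ, 1 ≤ k ∧ k ≤ N ∧ w = k)
    (hpred : ∀ k : ℕ, ((k + 2 : ℕ) : ℕ∞) ∈ S → ((k + 1 : ℕ) : ℕ∞) ∈ S) :
    ∃ n : ℕ, 0 < n ∧ S = {w : ℕ∞ | ∃ k : ℕ, 1 ≤ k ∧ k ≤ n ∧ w = k} := by
  classical
  set n := Nat.findGreatest (fun k : ℕ => (k : ℕ∞) ∈ S) N
  have h1' : ((1 : ℕ) : ℕ∞) ∈ S := by simpa using h1
  have h1N : 1 ≤ N := by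
    obtain ⟨k, hk, hkN, h⟩ := hS _ h1'
    exact (Nat.cast_injective h ▸ hkN)
  refine ⟨n, Nat.le_findGreatest h1N h1', Set.ext fun w => ⟨fun hw => ?_, ?_⟩⟩
  · obtain ⟨k, hk1, hkN, rfl⟩ := hS w hw
    exact ⟨k, hk1, Nat.le_findGreatest hkN hw, rfl⟩
  · rintro ⟨k, hk1, hkn, rfl⟩
    refine Nat.decreasingInduction (motive := fun k _ => 1 ≤ k → (k : ℕ∞) ∈ S)
      (fun k _ ih hk => ?_) (fun _ => Nat.findGreatest_spec (P := (↑· ∈ S)) h1N h1') hkn hk1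
    obtain ⟨j, rfl⟩ := Nat.exists_eq_add_of_le' hk
    exact hpred j (ih (by omega))

/-- For a nontrivial artinian commutative ring `R`, `Ω(R) = {1, …, n}` for some
positive integer `n`; moreover `Ω(R) = {1}` iff `R` is a field. -/
theorem omegaSet_artinian {R : Type*} [CommRing R] [Nontrivial R] [IsArtinianRing R] :
    (∃ n : ℕ, 0 < n ∧
      OmegaSet R = {w : ℕ∞ | ∃ k : ℕ, 1 ≤ k ∧ k ≤ n ∧ w = (k : ℕ∞)}) ∧
    (OmegaSet R = {(1 : ℕ∞)} ↔ IsField R) := by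
  obtain ⟨N, hN⟩ := exists_forall_isNAbsorbing R
  refine ⟨ENat.exists_eq_initial_segment_of_pred_mem (N := N) (one_mem_omegaSet R) ?_
    fun _ => mem_omegaSet_of_succ_mem,
    omegaSet_eq_singleton_one_iff R⟩
  rintro _ ⟨I, hI, rfl⟩
  exact exists_omegaR_eq hI (hN I)
end

section
/- Let R be an integral domain, let 𝓘 be a nonempty set of proper ideals of R containing the zero ideal, and let H be a subgroup of the permutation group Perm(𝓘). If H is ω-stable and transitive over 𝓘, then every ideal in 𝓘 is a prime ideal of R. -/
lemma isNAbsorbing_one_of_prime {R : Type*} [CommRing R] {I : Ideal R}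
    (hI : I.IsPrime) : IsNAbsorbing 1 I := by
  intro x hx
  have hx2 : x 0 * x 1 ∈ I := by
    simpa [Fin.prod_univ_two] using hx
  rcases hI.mem_or_mem hx2 with h | h
  · exact ⟨fun _ => 0, Subsingleton.strictMono _, by simpa using h⟩
  · exact ⟨fun _ => 1, Subsingleton.strictMono _, by simpa using h⟩

lemma isPrime_of_isNAbsorbing_one {R : Type*} [CommRing R] {I : Ideal R}
    (hI : I ≠ ⊤) (h : IsNAbsorbing 1 I) : I.IsPrime := by
  refine ⟨hI, ?_⟩
  intro a b hab
  obtain ⟨ι, _, hmem⟩ := h ![a, b] (by simpa [Fin.prod_univ_two] using hab)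
  have hmem' : ![a, b] (ι 0) ∈ I := by simpa using hmem
  have h01 : ι 0 = 0 ∨ ι 0 = 1 := by
    rcases Fin.exists_fin_two.mp ⟨ι 0, rfl⟩ with h | h <;> [left; right] <;> exact h
  rcases h01 with h0 | h0 <;> rw [h0] at hmem' <;> simp_all

/-- In an integral domain, if `𝓘` contains the zero ideal and some subgroup `H` of
`Perm 𝓘` is `ω`-stable and transitive over `𝓘`, then every ideal in `𝓘` is prime. -/
theorem isPrime_of_stable_transitive {R : Type*} [CommRing R] [IsDomain R]
    (𝓘 : Set (Ideal R)) (hne : 𝓘.Nonempty) (hprop : ∀ I ∈ 𝓘, I ≠ ⊤)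
    (hbot : (⊥ : Ideal R) ∈ 𝓘)
    (H : Subgroup (Equiv.Perm 𝓘))
    (hstable : ∀ h ∈ H, ∀ I : 𝓘, omegaR ((h I : 𝓘) : Ideal R) = omegaR (I : Ideal R))
    (htrans : ∀ I J : 𝓘, ∃ h ∈ H, h I = J) :
    ∀ I ∈ 𝓘, I.IsPrime := by
  intro I hI
  -- omegaR ⊥ ≤ 1
  have hbotprime : (⊥ : Ideal R).IsPrime := by
    exact Ideal.bot_prime
  have habs : IsNAbsorbing 1 (⊥ : Ideal R) := isNAbsorbing_one_of_prime hbotprime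
  have hle : omegaR (⊥ : Ideal R) ≤ 1 :=
    sInf_le ⟨1, one_pos, by norm_num, habs⟩
  -- transfer to I
  obtain ⟨h, hH, hmap⟩ := htrans ⟨⊥, hbot⟩ ⟨I, hI⟩
  have heq : omegaR I = omegaR (⊥ : Ideal R) := by
    have := hstable h hH ⟨⊥, hbot⟩
    rw [hmap] at this
    exact this
  have hlt : omegaR I < 2 := lt_of_le_of_lt (heq ▸ hle) (by norm_num)
  -- extract 1-absorbing
  rw [omegaR] at hlt
  obtain ⟨w, ⟨n, hn, rfl, habsn⟩, hw2⟩ := sInf_lt_iff.mp hlt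
  have hn1 : n = 1 := by
    have : (n : ℕ∞) < 2 := hw2
    have : n < 2 := by exact_mod_cast this
    omega
  subst hn1
  exact isPrime_of_isNAbsorbing_one (hprop I hI) habsn
end
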